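/- arXiv:2006.01663 — 2 statements merged into one kernel-verified Lean document; each statement's English description precedes it below -/
import Mathlib

section
/- Let L be a PG-lattice and M be a faithful multiplication PG-lattice L-module with I_M compact. If a proper element q ∈ L is prime, then qI_M is a prime element of M. -/
open CompleteLattice

universe u v

/-- A multiplicative lattice: a complete lattice with a commutative, associative
multiplication distributing over arbitrary joins, whose greatest element `⊤` is the
multiplicative identity `1`.  Following the standing assumptions of the paper, we also
require that the lattice is compactly generated, that `1` is compact and that finite
products of compact elements are compact. -/
class MultiplicativeLattice (L : Type u) extends CompleteLattice L, CommMonoid L where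
  mul_sSup : ∀ (a : L) (S : Set L), a * sSup S = ⨆ b ∈ S, a * b
  one_eq_top : (1 : L) = ⊤
  compactlyGenerated : ∀ a : L, a = sSup {c : L | IsCompactElement c ∧ c ≤ a}
  top_compact : IsCompactElement (⊤ : L)
  mul_compact : ∀ a b : L, IsCompactElement a → IsCompactElement b →
    IsCompactElement (a * b)

/-- A lattice module `M` over a multiplicative lattice `L`. -/
class LatticeModule (L : Type u) [MultiplicativeLattice L] (M : Type v)
    extends CompleteLattice M, SMul L M where
  sSup_smul : ∀ (S : Set L) (A : M), (SupSet.sSup S : L) • A = ⨆ a ∈ S, a • A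
  smul_sSup : ∀ (a : L) (S : Set M), a • (sSup S) = ⨆ B ∈ S, a • B
  mul_smul : ∀ (a b : L) (A : M), (a * b) • A = a • b • A
  one_smul : ∀ A : M, (1 : L) • A = A
  bot_smul : ∀ A : M, (⊥ : L) • A = (⊥ : M)

section LDefs

variable {L : Type u} [MultiplicativeLattice L]

/-- The residual `(a : b)` in `L`. -/
def lcolon (a b : L) : L := sSup {x : L | x * b ≤ a}

/-- The radical `√a` of an element of `L`. -/
def lrad (a : L) : L :=
  sSup {x : L | IsCompactElement x ∧ ∃ n : ℕ, 0 < n ∧ x ^ n ≤ a}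

/-- A prime element of `L`: proper, and `a * b ≤ p` implies `a ≤ p` or `b ≤ p`. -/
def IsPrimeL (p : L) : Prop :=
  p < 1 ∧ ∀ a b : L, a * b ≤ p → a ≤ p ∨ b ≤ p

/-- A primary element of `L`: proper, and for compact `a, b`, `a * b ≤ q` implies
`a ≤ q` or `b ^ n ≤ q` for some positive `n`. -/
def IsPrimaryL (q : L) : Prop :=
  q < 1 ∧ ∀ a b : L, IsCompactElement a → IsCompactElement b → a * b ≤ q →
    a ≤ q ∨ ∃ n : ℕ, 0 < n ∧ b ^ n ≤ q

/-- A principal element of `L` (meet principal and join principal). -/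
def IsPrincipalElemL (e : L) : Prop :=
  (∀ a b : L, a ⊓ b * e = (lcolon a e ⊓ b) * e) ∧
  (∀ a b : L, lcolon (a * e ⊔ b) e = lcolon b e ⊔ a)

end LDefs

/-- `L` is a PG-lattice: every element is a join of principal elements. -/
def IsPGLattice (L : Type u) [MultiplicativeLattice L] : Prop :=
  ∀ a : L, a = sSup {p : L | IsPrincipalElemL p ∧ p ≤ a}

section MDefs

variable (L : Type u) {M : Type v} [MultiplicativeLattice L] [LatticeModule L M]

/-- The residual `(A : B) ∈ L` of two elements of `M`. -/
def colon (A B : M) : L := sSup {x : L | x • B ≤ A}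

/-- The residual `(N : a) ∈ M` of an element of `M` by an element of `L`. -/
def mcolon (N : M) (a : L) : M := sSup {X : M | a • X ≤ N}

/-- A prime element of `M`. -/
def IsPrimeM (N : M) : Prop :=
  N < ⊤ ∧ ∀ (a : L) (X : M), a • X ≤ N → X ≤ N ∨ a • (⊤ : M) ≤ N

/-- A primary element of `M`. -/
def IsPrimaryM (N : M) : Prop :=
  N < ⊤ ∧ ∀ (a : L) (X : M), a • X ≤ N →
    X ≤ N ∨ ∃ n : ℕ, 0 < n ∧ (a ^ n) • (⊤ : M) ≤ N

/-- The radical `rad N` of an element of `M`: the meet of all prime elements above it. -/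
def mrad (N : M) : M := sInf {P : M | IsPrimeM L P ∧ N ≤ P}

/-- A pseudo-primary element of `M`. -/
def IsPseudoPrimary (N : M) : Prop :=
  N < ⊤ ∧ ∀ (a : L) (X : M), a • X ≤ N → a ≤ colon L N ⊤ ∨ X ≤ mrad L N

/-- A classical prime element of `M`. -/
def IsClassicalPrime (N : M) : Prop :=
  N < ⊤ ∧ ∀ (a b : L) (K : M), (a * b) • K ≤ N → a • K ≤ N ∨ b • K ≤ N

/-- A pseudo-classical primary element of `M`. -/
def IsPseudoClassicalPrimary (N : M) : Prop :=
  N < ⊤ ∧ ∀ (a b : L) (K : M), (a * b) • K ≤ N → a • K ≤ N ∨ b • K ≤ mrad L N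

/-- A principal element of `M` (meet principal and join principal). -/
def IsPrincipalElem (N : M) : Prop :=
  (∀ (b : L) (B : M), (b ⊓ colon L B N) • N = b • N ⊓ B) ∧
  (∀ (b : L) (B : M), b ⊔ colon L B N = colon L (b • N ⊔ B) N)

/-- The saturation `S_p(N)` of `N` with respect to `p`. -/
def saturation (N : M) (p : L) : M :=
  sSup {X : M | ∃ c : L, ¬ c ≤ p ∧ c • X ≤ N}

variable (M)

/-- `M` is a PG-lattice `L`-module. -/
def IsPGModule : Prop := ∀ N : M, N = sSup {P : M | IsPrincipalElem L P ∧ P ≤ N}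

/-- `M` is a multiplication lattice `L`-module. -/
def IsMultiplicationModule : Prop := ∀ N : M, ∃ a : L, N = a • (⊤ : M)

/-- `M` is a faithful `L`-module. -/
def IsFaithful : Prop := colon L (⊥ : M) (⊤ : M) = (⊥ : L)

/-- `M` is a CG (compactly generated) lattice `L`-module. -/
def IsCGModule : Prop := ∀ N : M, N = sSup {K : M | IsCompactElement K ∧ K ≤ N}

end MDefs


section Helpers

variable {L : Type u} {M : Type v} [MultiplicativeLattice L] [LatticeModule L M]

lemma mul_sup' (a b c : L) : a * (b ⊔ c) = a * b ⊔ a * c := by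
  have h := MultiplicativeLattice.mul_sSup a {b, c}
  rw [sSup_pair] at h
  rw [h, iSup_pair]

lemma smul_sup' (a : L) (B C : M) : a • (B ⊔ C) = a • B ⊔ a • C := by
  have h := LatticeModule.smul_sSup a {B, C}
  rw [sSup_pair] at h
  rw [h, iSup_pair]

lemma sup_smul' (a b : L) (C : M) : (a ⊔ b) • C = a • C ⊔ b • C := by
  have h := LatticeModule.sSup_smul {a, b} C
  rw [sSup_pair] at h
  rw [h, iSup_pair]

lemma mul_le_left' (a b : L) : a * b ≤ a := by
  have h1 : b ⊔ 1 = 1 := by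
    rw [MultiplicativeLattice.one_eq_top]; exact sup_top_eq b
  calc a * b ≤ a * b ⊔ a * 1 := le_sup_left
    _ = a * (b ⊔ 1) := (mul_sup' a b 1).symm
    _ = a * 1 := by rw [h1]
    _ = a := mul_one a

lemma mul_le_right' (a b : L) : a * b ≤ b := by
  rw [mul_comm]; exact mul_le_left' b a

lemma mul_mono_left' {a b : L} (h : a ≤ b) (c : L) : a * c ≤ b * c := by
  calc a * c ≤ a * c ⊔ b * c := le_sup_left
    _ = (a ⊔ b) * c := by rw [mul_comm a c, mul_comm b c, mul_comm _ c, mul_sup']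
    _ = b * c := by rw [sup_eq_right.mpr h]

lemma smul_mono_left' {a b : L} (h : a ≤ b) (X : M) : a • X ≤ b • X := by
  calc a • X ≤ a • X ⊔ b • X := le_sup_left
    _ = (a ⊔ b) • X := (sup_smul' a b X).symm
    _ = b • X := by rw [sup_eq_right.mpr h]

lemma smul_mono_right' (a : L) {X Y : M} (h : X ≤ Y) : a • X ≤ a • Y := by
  calc a • X ≤ a • X ⊔ a • Y := le_sup_left
    _ = a • (X ⊔ Y) := (smul_sup' a X Y).symm
    _ = a • Y := by rw [sup_eq_right.mpr h]

lemma le_colon' {y : L} {A B : M} (h : y • B ≤ A) : y ≤ colon L A B := le_sSup h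

lemma colon_smul_le' (A B : M) : colon L A B • B ≤ A := by
  rw [colon, LatticeModule.sSup_smul]
  exact iSup₂_le fun y hy => hy

lemma le_one' (x : L) : x ≤ 1 := by
  rw [MultiplicativeLattice.one_eq_top]; exact le_top

lemma prime_pow_le' {q : L} (hq : IsPrimeL q) :
    ∀ n : ℕ, 0 < n → ∀ x : L, x ^ n ≤ q → x ≤ q := by
  intro n
  induction n with
  | zero => intro h; exact absurd h (by omega)
  | succ k ih =>
    intro _ x hx
    rw [pow_succ] at hx
    rcases hq.2 _ _ hx with h | h
    · rcases Nat.eq_zero_or_pos k with rfl | hk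
      · rw [pow_zero] at h
        exact le_trans (le_one' x) h
      · exact ih hk x h
    · exact h

end Helpers

theorem stmt7 {L : Type u} {M : Type v} [MultiplicativeLattice L] [LatticeModule L M]
    (hPG : IsPGLattice L) (hfaith : IsFaithful L M)
    (hmul : IsMultiplicationModule L M) (hPGM : IsPGModule L M)
    (hcomp : IsCompactElement (⊤ : M))
    (q : L) (hq : IsPrimeL q) :
    IsPrimeM L (q • (⊤ : M)) := by
  obtain ⟨hq1, hqp⟩ := hq
  -- write ⊤ as a finite join of principal elements
  have hS := hPGM (⊤ : M)
  obtain ⟨t, htS, htle⟩ := (isCompactElement_iff_exists_le_sSup_of_le_sSup M (⊤ : M)).mp hcomp _ (le_of_eq hS)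
  have htop : (⊤ : M) = t.sup id := le_antisymm htle le_top
  -- key cancellation lemma
  have key : ∀ x : L, x • (⊤ : M) ≤ q • (⊤ : M) → x ≤ q := by
    intro x hx
    -- each P ∈ t satisfies x ≤ q ⊔ (⊥ : P)
    have hxq : ∀ P ∈ t, x ≤ q ⊔ colon L (⊥ : M) P := by
      intro P hP
      obtain ⟨hPprin, -⟩ := htS hP
      -- P = (P : ⊤) • ⊤
      obtain ⟨b, hb⟩ := hmul P
      have hble : b ≤ colon L P (⊤ : M) := le_colon' (le_of_eq hb.symm)
      have hPeq : P = colon L P (⊤ : M) • (⊤ : M) := by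
        refine le_antisymm ?_ (colon_smul_le' P ⊤)
        calc P = b • (⊤ : M) := hb
          _ ≤ colon L P (⊤ : M) • (⊤ : M) := smul_mono_left' hble ⊤
      set c := colon L P (⊤ : M) with hc
      have hxP : x • P ≤ q • P := by
        calc x • P = x • (c • ⊤) := by rw [← hPeq]
          _ = (x * c) • ⊤ := (LatticeModule.mul_smul x c ⊤).symm
          _ = (c * x) • ⊤ := by rw [mul_comm]
          _ = c • (x • ⊤) := LatticeModule.mul_smul c x ⊤
          _ ≤ c • (q • ⊤) := smul_mono_right' c hx
          _ = (c * q) • ⊤ := (LatticeModule.mul_smul c q ⊤).symm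
          _ = (q * c) • ⊤ := by rw [mul_comm]
          _ = q • (c • ⊤) := LatticeModule.mul_smul q c ⊤
          _ = q • P := by rw [← hPeq]
      have hjp := hPprin.2 q (⊥ : M)
      rw [sup_bot_eq] at hjp
      rw [hjp]
      exact le_colon' hxP
    -- by induction, find w with x ^ card ≤ q ⊔ w and w below every (⊥ : P)
    have claim : ∀ s : Finset M, (∀ P ∈ s, x ≤ q ⊔ colon L (⊥ : M) P) →
        ∃ w : L, (∀ P ∈ s, w ≤ colon L (⊥ : M) P) ∧ x ^ s.card ≤ q ⊔ w := by
      intro s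
      classical
      induction s using Finset.induction_on with
      | empty =>
        intro _
        refine ⟨1, by simp, ?_⟩
        rw [Finset.card_empty, pow_zero]
        exact le_sup_right
      | insert P s hPs ih =>
        intro hall
        obtain ⟨w, hw1, hw2⟩ := ih (fun Q hQ => hall Q (Finset.mem_insert_of_mem hQ))
        refine ⟨colon L (⊥ : M) P * w, ?_, ?_⟩
        · intro Q hQ
          rcases Finset.mem_insert.mp hQ with rfl | hQ
          · exact mul_le_left' _ _
          · exact le_trans (mul_le_right' _ _) (hw1 Q hQ)
        · rw [Finset.card_insert_of_notMem hPs, pow_succ]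
          have hxx := hall P (Finset.mem_insert_self P s)
          calc x ^ s.card * x ≤ (q ⊔ w) * (q ⊔ colon L (⊥ : M) P) := by
                exact le_trans (mul_mono_left' hw2 x)
                  (by rw [mul_comm, mul_comm (q ⊔ w)]; exact mul_mono_left' hxx _)
            _ = (q ⊔ w) * q ⊔ (q ⊔ w) * colon L (⊥ : M) P := mul_sup' _ _ _
            _ ≤ q ⊔ colon L (⊥ : M) P * w := by
                apply sup_le
                · exact le_trans (mul_le_right' _ _) le_sup_left
                · rw [mul_comm (q ⊔ w) (colon L (⊥ : M) P), mul_sup']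
                  apply sup_le
                  · exact le_trans (mul_le_right' _ _) le_sup_left
                  · exact le_sup_right
    obtain ⟨w, hw1, hw2⟩ := claim t hxq
    -- w • ⊤ = ⊥, hence w = ⊥ by faithfulness
    have hwtop : w • (⊤ : M) ≤ ⊥ := by
      rw [htop, Finset.sup_id_eq_sSup, LatticeModule.smul_sSup]
      refine iSup₂_le fun B hB => ?_
      exact le_trans (smul_mono_left' (hw1 B hB) B) (colon_smul_le' ⊥ B)
    have hwbot : w = ⊥ := le_bot_iff.mp (hfaith ▸ le_colon' hwtop)
    rw [hwbot, sup_bot_eq] at hw2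
    rcases Nat.eq_zero_or_pos t.card with hcard | hcard
    · rw [hcard, pow_zero] at hw2
      exact le_trans (le_one' x) hw2
    · exact prime_pow_le' ⟨hq1, hqp⟩ t.card hcard x hw2
  constructor
  · refine lt_of_le_of_ne le_top fun h => ?_
    have h1 : (1 : L) • (⊤ : M) ≤ q • ⊤ := by
      rw [LatticeModule.one_smul]; exact h.ge
    exact absurd (key 1 h1) (not_le_of_gt hq1)
  · intro a X haX
    obtain ⟨b, hb⟩ := hmul X
    have hab : (a * b) • (⊤ : M) ≤ q • ⊤ := by
      rw [LatticeModule.mul_smul, ← hb]; exact haX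
    rcases hqp a b (key _ hab) with h | h
    · exact Or.inr (smul_mono_left' h ⊤)
    · exact Or.inl (hb ▸ smul_mono_left' h ⊤)
end

section
/- Let N be a proper element of an L-module M. Then: (1) N is classical prime if and only if (N:K) is a prime element of L for every K ∈ M with K ≰ N; (2) if N is classical prime then (N:I_M) is a prime element of L; (3) if N is classical prime then (N:K) = (N:rK) for all proper elements r ∈ L and K ∈ M with rK ≰ N; (4) if N is classical prime and M is a multiplication lattice L-module, then {(N:K) | K ∈ M, K ≰ N} is a chain of prime elements of L. -/
open CompleteLattice

universe u v

section AuxHelpers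

variable {L : Type u} {M : Type v} [MultiplicativeLattice L] [LatticeModule L M]

lemma aux_smul_mono_left {a b : L} (h : a ≤ b) (K : M) : a • K ≤ b • K := by
  have hd : (sSup ({a, b} : Set L) : L) • K = ⨆ c ∈ ({a, b} : Set L), c • K :=
    LatticeModule.sSup_smul _ _
  have hsup : sSup ({a, b} : Set L) = b := by
    rw [sSup_pair, sup_eq_right.mpr h]
  rw [hsup] at hd
  rw [hd]
  exact le_biSup (fun c => c • K) (by simp)

lemma aux_smul_mono_right (a : L) {A B : M} (h : A ≤ B) : a • A ≤ a • B := by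
  have hd : a • (sSup ({A, B} : Set M)) = ⨆ C ∈ ({A, B} : Set M), a • C :=
    LatticeModule.smul_sSup _ _
  have hsup : sSup ({A, B} : Set M) = B := by
    rw [sSup_pair, sup_eq_right.mpr h]
  rw [hsup] at hd
  rw [hd]
  exact le_biSup (fun C => a • C) (by simp)

lemma aux_one_smul (K : M) : (⊤ : L) • K = K := by
  rw [← MultiplicativeLattice.one_eq_top, LatticeModule.one_smul]

lemma aux_smul_le_self (a : L) (K : M) : a • K ≤ K := by
  calc a • K ≤ (⊤ : L) • K := aux_smul_mono_left le_top K
    _ = K := aux_one_smul K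

lemma aux_colon_smul_le (N K : M) : colon L N K • K ≤ N := by
  rw [colon, LatticeModule.sSup_smul]
  exact iSup₂_le fun x hx => hx

lemma aux_le_colon {N K : M} {x : L} (h : x • K ≤ N) : x ≤ colon L N K :=
  le_sSup h

lemma aux_lt_one_iff {a : L} : a < 1 ↔ a ≠ ⊤ := by
  rw [MultiplicativeLattice.one_eq_top, lt_top_iff_ne_top]

end AuxHelpers

theorem stmt14 {L : Type u} {M : Type v} [MultiplicativeLattice L] [LatticeModule L M]
    (N : M) (hN : N < ⊤) :
    (IsClassicalPrime L N ↔ ∀ K : M, ¬ K ≤ N → IsPrimeL (colon L N K)) ∧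
    (IsClassicalPrime L N → IsPrimeL (colon L N (⊤ : M))) ∧
    (IsClassicalPrime L N → ∀ (r : L) (K : M), r < 1 → K < ⊤ → ¬ r • K ≤ N →
      colon L N K = colon L N (r • K)) ∧
    (IsClassicalPrime L N → IsMultiplicationModule L M →
      ∀ K₁ K₂ : M, ¬ K₁ ≤ N → ¬ K₂ ≤ N →
        IsPrimeL (colon L N K₁) ∧
          (colon L N K₁ ≤ colon L N K₂ ∨ colon L N K₂ ≤ colon L N K₁)) := by
  -- Part (1)
  have part1 : IsClassicalPrime L N ↔ ∀ K : M, ¬ K ≤ N → IsPrimeL (colon L N K) := by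
    constructor
    · rintro ⟨-, hcp⟩ K hK
      constructor
      · rw [aux_lt_one_iff]
        intro htop
        apply hK
        calc K = (⊤ : L) • K := (aux_one_smul K).symm
          _ = colon L N K • K := by rw [htop]
          _ ≤ N := aux_colon_smul_le N K
      · intro a b hab
        have h1 : (a * b) • K ≤ N := by
          calc (a * b) • K ≤ colon L N K • K :=
                aux_smul_mono_left hab K
            _ ≤ N := aux_colon_smul_le N K
        rcases hcp a b K h1 with h | h
        · exact Or.inl (aux_le_colon h)
        · exact Or.inr (aux_le_colon h)
    · intro h
      refine ⟨hN, fun a b K habK => ?_⟩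
      by_cases hK : K ≤ N
      · exact Or.inl ((aux_smul_le_self a K).trans hK)
      · rcases (h K hK).2 a b (aux_le_colon habK) with ha | hb
        · exact Or.inl ((aux_smul_mono_left ha K).trans (aux_colon_smul_le N K))
        · exact Or.inr ((aux_smul_mono_left hb K).trans (aux_colon_smul_le N K))
  refine ⟨part1, ?_, ?_, ?_⟩
  · -- Part (2)
    intro hCP
    exact part1.mp hCP ⊤ (fun h => absurd (le_antisymm h le_top) hN.ne')
  · -- Part (3)
    intro hCP r K _ _ hrK
    apply le_antisymm
    · apply sSup_le_sSup
      intro x hx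
      have : x • (r • K) ≤ N := by
        rw [← LatticeModule.mul_smul, mul_comm, LatticeModule.mul_smul]
        exact (aux_smul_mono_right r hx).trans (aux_smul_le_self r N)
      exact this
    · apply sSup_le_sSup
      intro x hx
      have hx' : (x * r) • K ≤ N := by
        rw [LatticeModule.mul_smul]; exact hx
      rcases hCP.2 x r K hx' with h | h
      · exact h
      · exact absurd h hrK
  · -- Part (4)
    intro hCP hMul K₁ K₂ hK₁ hK₂
    refine ⟨part1.mp hCP K₁ hK₁, ?_⟩
    -- In a multiplication module, all such colons are equal to colon L N ⊤.
    have key : ∀ K : M, ¬ K ≤ N → colon L N K = colon L N (⊤ : M) := by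
      intro K hK
      obtain ⟨a, ha⟩ := hMul K
      apply le_antisymm
      · -- colon L N K ≤ colon L N ⊤
        apply _root_.sSup_le
        intro x hx
        have hx' : (x * a) • (⊤ : M) ≤ N := by
          rw [LatticeModule.mul_smul, ← ha]; exact hx
        rcases hCP.2 x a ⊤ hx' with h | h
        · exact aux_le_colon h
        · rw [← ha] at h; exact absurd h hK
      · -- colon L N ⊤ ≤ colon L N K
        apply sSup_le_sSup
        intro x hx
        exact (aux_smul_mono_right x le_top).trans hx
    rw [key K₁ hK₁, key K₂ hK₂]
    exact Or.inl le_rfl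
end
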